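/- Let ω ⊆ ℝ² be open, h > 0, and μ, d ∈ ℝ. Let w : ℝ² → ℝ and u : ℝ → ℝ be smooth (C^∞) functions satisfying −(∂_xx w + ∂_yy w) = μ·w on ω, −u'' = d·u on [0,h], and u(0) = u(h) = 0. Define F : ℝ³ → ℝ³ by F(x,y,t) := (u(t)·∂_y w(x,y), −u(t)·∂_x w(x,y), 0). Then on ω × (0,h): div F = 0 and curl (curl F) = (μ + d)·F. Moreover F vanishes identically on the horizontal faces ω × {0,h}, so in particular e₃ × F = 0 there. -/

import Mathlib

noncomputable section

/-- Partial derivative in the first variable `x` of `g : ℝ³ → ℝ`, points written `(x, y, t)`. -/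
def pdx (g : ℝ × ℝ × ℝ → ℝ) (p : ℝ × ℝ × ℝ) : ℝ :=
  deriv (fun s => g (s, p.2.1, p.2.2)) p.1

/-- Partial derivative in the second variable `y`. -/
def pdy (g : ℝ × ℝ × ℝ → ℝ) (p : ℝ × ℝ × ℝ) : ℝ :=
  deriv (fun s => g (p.1, s, p.2.2)) p.2.1

/-- Partial derivative in the third variable `t`. -/
def pdt (g : ℝ × ℝ × ℝ → ℝ) (p : ℝ × ℝ × ℝ) : ℝ :=
  deriv (fun s => g (p.1, p.2.1, s)) p.2.2

/-- curl F = (∂_y F₃ − ∂_t F₂, ∂_t F₁ − ∂_x F₃, ∂_x F₂ − ∂_y F₁). -/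
def curl3 (F : ℝ × ℝ × ℝ → ℝ × ℝ × ℝ) (p : ℝ × ℝ × ℝ) : ℝ × ℝ × ℝ :=
  (pdy (fun q => (F q).2.2) p - pdt (fun q => (F q).2.1) p,
   pdt (fun q => (F q).1) p - pdx (fun q => (F q).2.2) p,
   pdx (fun q => (F q).2.1) p - pdy (fun q => (F q).1) p)

/-- div F = ∂_x F₁ + ∂_y F₂ + ∂_t F₃. -/
def div3 (F : ℝ × ℝ × ℝ → ℝ × ℝ × ℝ) (p : ℝ × ℝ × ℝ) : ℝ :=
  pdx (fun q => (F q).1) p + pdy (fun q => (F q).2.1) p + pdt (fun q => (F q).2.2) p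

/-- ∇g = (∂_x g, ∂_y g, ∂_t g). -/
def grad3 (g : ℝ × ℝ × ℝ → ℝ) (p : ℝ × ℝ × ℝ) : ℝ × ℝ × ℝ :=
  (pdx g p, pdy g p, pdt g p)

/-- Scalar Laplacian Δ₃ g = ∂_xx g + ∂_yy g + ∂_tt g. -/
def lap3 (g : ℝ × ℝ × ℝ → ℝ) (p : ℝ × ℝ × ℝ) : ℝ :=
  pdx (pdx g) p + pdy (pdy g) p + pdt (pdt g) p

/-- Componentwise (vector) Laplacian ΔF = (Δ₃F₁, Δ₃F₂, Δ₃F₃). -/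
def vecLap (F : ℝ × ℝ × ℝ → ℝ × ℝ × ℝ) (p : ℝ × ℝ × ℝ) : ℝ × ℝ × ℝ :=
  (lap3 (fun q => (F q).1) p, lap3 (fun q => (F q).2.1) p, lap3 (fun q => (F q).2.2) p)

/-- Partial derivative in `x` for `g : ℝ² → ℝ`. -/
def pdx2 (g : ℝ × ℝ → ℝ) (p : ℝ × ℝ) : ℝ :=
  deriv (fun s => g (s, p.2)) p.1

/-- Partial derivative in `y` for `g : ℝ² → ℝ`. -/
def pdy2 (g : ℝ × ℝ → ℝ) (p : ℝ × ℝ) : ℝ :=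
  deriv (fun s => g (p.1, s)) p.2

/-- Cross product on ℝ³ = ℝ × ℝ × ℝ. -/
def cross3 (a b : ℝ × ℝ × ℝ) : ℝ × ℝ × ℝ :=
  (a.2.1 * b.2.2 - a.2.2 * b.2.1,
   a.2.2 * b.1 - a.1 * b.2.2,
   a.1 * b.2.1 - a.2.1 * b.1)


section Helpers

lemma diff_slice1 {g : ℝ×ℝ→ℝ} (hg : ContDiff ℝ (⊤ : ℕ∞) g) (y : ℝ) :
    Differentiable ℝ (fun s => g (s, y)) :=
  (hg.differentiable (by simp)).comp (differentiable_id.prodMk (differentiable_const _))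

lemma diff_slice2 {g : ℝ×ℝ→ℝ} (hg : ContDiff ℝ (⊤ : ℕ∞) g) (x : ℝ) :
    Differentiable ℝ (fun s => g (x, s)) :=
  (hg.differentiable (by simp)).comp ((differentiable_const _).prodMk differentiable_id)

lemma pdx2_eq_fderiv {g : ℝ×ℝ→ℝ} (hg : Differentiable ℝ g) (p : ℝ×ℝ) :
    pdx2 g p = fderiv ℝ g p (1,0) := by
  have h1 : HasDerivAt (fun s : ℝ => ((s, p.2) : ℝ×ℝ)) ((1:ℝ),(0:ℝ)) p.1 :=
    HasDerivAt.prodMk (hasDerivAt_id p.1) (hasDerivAt_const _ _)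
  exact ((hg p).hasFDerivAt.comp_hasDerivAt p.1 h1).deriv

lemma pdy2_eq_fderiv {g : ℝ×ℝ→ℝ} (hg : Differentiable ℝ g) (p : ℝ×ℝ) :
    pdy2 g p = fderiv ℝ g p (0,1) := by
  have h1 : HasDerivAt (fun s : ℝ => ((p.1, s) : ℝ×ℝ)) ((0:ℝ),(1:ℝ)) p.2 :=
    HasDerivAt.prodMk (hasDerivAt_const _ _) (hasDerivAt_id p.2)
  exact ((hg p).hasFDerivAt.comp_hasDerivAt p.2 h1).deriv

lemma contDiff_pdx2 {g : ℝ×ℝ→ℝ} (hg : ContDiff ℝ (⊤ : ℕ∞) g) : ContDiff ℝ (⊤ : ℕ∞) (pdx2 g) := by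
  have : pdx2 g = fun p => fderiv ℝ g p (1,0) :=
    funext (pdx2_eq_fderiv (hg.differentiable (by simp)))
  rw [this]; exact (hg.fderiv_right (by simp)).clm_apply contDiff_const

lemma contDiff_pdy2 {g : ℝ×ℝ→ℝ} (hg : ContDiff ℝ (⊤ : ℕ∞) g) : ContDiff ℝ (⊤ : ℕ∞) (pdy2 g) := by
  have : pdy2 g = fun p => fderiv ℝ g p (0,1) :=
    funext (pdy2_eq_fderiv (hg.differentiable (by simp)))
  rw [this]; exact (hg.fderiv_right (by simp)).clm_apply contDiff_const

lemma fderiv_eval {g : ℝ×ℝ→ℝ} (hg : ContDiff ℝ (⊤ : ℕ∞) g) (p v a : ℝ×ℝ) :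
    fderiv ℝ (fun q => fderiv ℝ g q v) p a = fderiv ℝ (fderiv ℝ g) p a v := by
  have hd : DifferentiableAt ℝ (fderiv ℝ g) p :=
    ((hg.fderiv_right (m := 1) (WithTop.coe_le_coe.mpr le_top)).differentiable one_ne_zero) p
  rw [fderiv_clm_apply hd (differentiableAt_const v)]
  simp

lemma clairaut {g : ℝ×ℝ→ℝ} (hg : ContDiff ℝ (⊤ : ℕ∞) g) (p : ℝ×ℝ) :
    pdx2 (pdy2 g) p = pdy2 (pdx2 g) p := by
  have hdg := hg.differentiable (by simp)
  have e1 : pdy2 g = fun q => fderiv ℝ g q (0,1) := funext (pdy2_eq_fderiv hdg)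
  have e2 : pdx2 g = fun q => fderiv ℝ g q (1,0) := funext (pdx2_eq_fderiv hdg)
  have hcd : Differentiable ℝ fun q : ℝ×ℝ => fderiv ℝ g q ((0:ℝ),(1:ℝ)) :=
    ((hg.fderiv_right (m := 1) (WithTop.coe_le_coe.mpr le_top)).clm_apply contDiff_const).differentiable one_ne_zero
  have hcd' : Differentiable ℝ fun q : ℝ×ℝ => fderiv ℝ g q ((1:ℝ),(0:ℝ)) :=
    ((hg.fderiv_right (m := 1) (WithTop.coe_le_coe.mpr le_top)).clm_apply contDiff_const).differentiable one_ne_zero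
  rw [pdx2_eq_fderiv (by rw [e1]; exact hcd), pdy2_eq_fderiv (by rw [e2]; exact hcd')]
  rw [e1, e2, fderiv_eval hg, fderiv_eval hg]
  have h1 : ∀ y, HasFDerivAt g (fderiv ℝ g y) y := fun y => (hdg y).hasFDerivAt
  have h2 : HasFDerivAt (fderiv ℝ g) (fderiv ℝ (fderiv ℝ g) p) p :=
    (((hg.fderiv_right (m := 1) (WithTop.coe_le_coe.mpr le_top)).differentiable one_ne_zero) p).hasFDerivAt
  exact second_derivative_symmetric h1 h2 _ _

lemma pdx_umul (u : ℝ → ℝ) {g : ℝ×ℝ→ℝ} (hg : ContDiff ℝ (⊤ : ℕ∞) g) (p : ℝ×ℝ×ℝ) :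
    pdx (fun q => u q.2.2 * g (q.1, q.2.1)) p = u p.2.2 * pdx2 g (p.1, p.2.1) := by
  show deriv (fun s => u p.2.2 * g (s, p.2.1)) p.1 = _
  rw [deriv_const_mul _ ((diff_slice1 hg p.2.1) p.1)]; rfl

lemma pdy_umul (u : ℝ → ℝ) {g : ℝ×ℝ→ℝ} (hg : ContDiff ℝ (⊤ : ℕ∞) g) (p : ℝ×ℝ×ℝ) :
    pdy (fun q => u q.2.2 * g (q.1, q.2.1)) p = u p.2.2 * pdy2 g (p.1, p.2.1) := by
  show deriv (fun s => u p.2.2 * g (p.1, s)) p.2.1 = _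
  rw [deriv_const_mul _ ((diff_slice2 hg p.1) p.2.1)]; rfl

lemma pdt_umul {u : ℝ → ℝ} (hu : ContDiff ℝ (⊤ : ℕ∞) u) (g : ℝ×ℝ→ℝ) (p : ℝ×ℝ×ℝ) :
    pdt (fun q => u q.2.2 * g (q.1, q.2.1)) p = deriv u p.2.2 * g (p.1, p.2.1) := by
  show deriv (fun s => u s * g (p.1, p.2.1)) p.2.2 = _
  rw [deriv_mul_const ((hu.differentiable (by simp)) p.2.2)]

lemma pdx_neg (f : ℝ×ℝ×ℝ → ℝ) (p : ℝ×ℝ×ℝ) :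
    pdx (fun q => -(f q)) p = -(pdx f p) := by
  show deriv (fun s => -(f (s, p.2.1, p.2.2))) p.1 = _
  exact deriv.neg

lemma pdy_neg (f : ℝ×ℝ×ℝ → ℝ) (p : ℝ×ℝ×ℝ) :
    pdy (fun q => -(f q)) p = -(pdy f p) := by
  show deriv (fun s => -(f (p.1, s, p.2.2))) p.2.1 = _
  exact deriv.neg

lemma pdt_neg (f : ℝ×ℝ×ℝ → ℝ) (p : ℝ×ℝ×ℝ) :
    pdt (fun q => -(f q)) p = -(pdt f p) := by
  show deriv (fun s => -(f (p.1, p.2.1, s))) p.2.2 = _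
  exact deriv.neg

end Helpers
/-- the TM-family `F = (u·∂_y w, −u·∂ₓw, 0)` is divergence free and satisfies
`curl curl F = (μ+d)·F` on `ω × (0,h)`; moreover `F` vanishes identically on the horizontal
faces `ω × {0,h}`, so in particular `e₃ × F = 0` there. -/
theorem TM_mode_eigenfunction (ω : Set (ℝ × ℝ)) (hω : IsOpen ω) (h : ℝ) (hh : 0 < h)
    (μ d : ℝ) (w : ℝ × ℝ → ℝ) (u : ℝ → ℝ)
    (hw : ContDiff ℝ (⊤ : ℕ∞) w) (hu : ContDiff ℝ (⊤ : ℕ∞) u)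
    (hweig : ∀ q ∈ ω, -(pdx2 (pdx2 w) q + pdy2 (pdy2 w) q) = μ * w q)
    (hueig : ∀ t ∈ Set.Icc (0 : ℝ) h, -(deriv (deriv u) t) = d * u t)
    (hu0 : u 0 = 0) (huh : u h = 0)
    (F : ℝ × ℝ × ℝ → ℝ × ℝ × ℝ)
    (hF : F = fun p =>
      (u p.2.2 * pdy2 w (p.1, p.2.1),
       -(u p.2.2 * pdx2 w (p.1, p.2.1)),
       (0 : ℝ))) :
    (∀ p : ℝ × ℝ × ℝ, (p.1, p.2.1) ∈ ω → p.2.2 ∈ Set.Ioo (0 : ℝ) h →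
      div3 F p = 0 ∧ curl3 (curl3 F) p = (μ + d) • F p) ∧
    (∀ p : ℝ × ℝ × ℝ, (p.1, p.2.1) ∈ ω → (p.2.2 = 0 ∨ p.2.2 = h) →
      F p = 0 ∧ cross3 ((0 : ℝ), (0 : ℝ), (1 : ℝ)) (F p) = 0) := by
  subst hF
  constructor
  · rintro ⟨x, y, t⟩ hpω hpt
    have hwx := contDiff_pdx2 hw
    have hwy := contDiff_pdy2 hw
    have hdu : Differentiable ℝ (deriv u) := by
      have h2 : ContDiff ℝ (1+1) u := hu.of_le (WithTop.coe_le_coe.mpr le_top)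
      exact (contDiff_succ_iff_deriv.mp h2).2.2.differentiable one_ne_zero
    -- the three components of curl F, as functions
    have h1 : (fun q => (curl3 (fun p : ℝ×ℝ×ℝ =>
        (u p.2.2 * pdy2 w (p.1, p.2.1), -(u p.2.2 * pdx2 w (p.1, p.2.1)), (0:ℝ))) q).1)
        = fun q : ℝ×ℝ×ℝ => deriv u q.2.2 * pdx2 w (q.1, q.2.1) := by
      funext q
      show pdy (fun _ : ℝ×ℝ×ℝ => (0:ℝ)) q
          - pdt (fun q : ℝ×ℝ×ℝ => -(u q.2.2 * pdx2 w (q.1, q.2.1))) q = _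
      rw [pdt_neg, pdt_umul hu]
      show deriv (fun _ => (0:ℝ)) q.2.1 - _ = _
      rw [deriv_const]; ring
    have h2 : (fun q => (curl3 (fun p : ℝ×ℝ×ℝ =>
        (u p.2.2 * pdy2 w (p.1, p.2.1), -(u p.2.2 * pdx2 w (p.1, p.2.1)), (0:ℝ))) q).2.1)
        = fun q : ℝ×ℝ×ℝ => deriv u q.2.2 * pdy2 w (q.1, q.2.1) := by
      funext q
      show pdt (fun q : ℝ×ℝ×ℝ => u q.2.2 * pdy2 w (q.1, q.2.1)) q
          - pdx (fun _ : ℝ×ℝ×ℝ => (0:ℝ)) q = _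
      rw [pdt_umul hu]
      show _ - deriv (fun _ => (0:ℝ)) q.1 = _
      rw [deriv_const]; ring
    have h3 : (fun q => (curl3 (fun p : ℝ×ℝ×ℝ =>
        (u p.2.2 * pdy2 w (p.1, p.2.1), -(u p.2.2 * pdx2 w (p.1, p.2.1)), (0:ℝ))) q).2.2)
        = fun q : ℝ×ℝ×ℝ => -(u q.2.2 *
            (pdx2 (pdx2 w) (q.1, q.2.1) + pdy2 (pdy2 w) (q.1, q.2.1))) := by
      funext q
      show pdx (fun q : ℝ×ℝ×ℝ => -(u q.2.2 * pdx2 w (q.1, q.2.1))) q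
          - pdy (fun q : ℝ×ℝ×ℝ => u q.2.2 * pdy2 w (q.1, q.2.1)) q = _
      rw [pdx_neg, pdx_umul u hwx, pdy_umul u hwy]; ring
    -- u'' value at t
    have hdd : deriv (deriv u) t = -(d * u t) := by
      have := hueig t ⟨le_of_lt hpt.1, le_of_lt hpt.2⟩; linarith
    constructor
    · -- divergence free
      show pdx (fun q : ℝ×ℝ×ℝ => u q.2.2 * pdy2 w (q.1, q.2.1)) (x,y,t)
          + pdy (fun q : ℝ×ℝ×ℝ => -(u q.2.2 * pdx2 w (q.1, q.2.1))) (x,y,t)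
          + pdt (fun _ : ℝ×ℝ×ℝ => (0:ℝ)) (x,y,t) = 0
      rw [pdx_umul u hwy, pdy_neg, pdy_umul u hwx]
      show _ + _ + deriv (fun _ => (0:ℝ)) t = 0
      rw [deriv_const, clairaut hw]; ring
    · -- curl curl F = (μ + d) • F
      show (pdy _ _ - pdt _ _, pdt _ _ - pdx _ _, pdx _ _ - pdy _ _) = _
      rw [h1, h2, h3]
      -- ∂_y of third curl component, using the eigen-equation near (x,y)
      have hmemy : ∀ᶠ s in nhds y, ((x, s) : ℝ×ℝ) ∈ ω :=
        ((continuous_const.prodMk continuous_id).continuousAt).preimage_mem_nhds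
          (hω.mem_nhds hpω)
      have hmemx : ∀ᶠ s in nhds x, ((s, y) : ℝ×ℝ) ∈ ω :=
        ((continuous_id.prodMk continuous_const).continuousAt).preimage_mem_nhds
          (hω.mem_nhds hpω)
      have hA : pdy (fun q : ℝ×ℝ×ℝ => -(u q.2.2 *
          (pdx2 (pdx2 w) (q.1, q.2.1) + pdy2 (pdy2 w) (q.1, q.2.1)))) (x,y,t)
          = u t * μ * pdy2 w (x, y) := by
        show deriv (fun s => -(u t * (pdx2 (pdx2 w) (x, s) + pdy2 (pdy2 w) (x, s)))) y = _
        have hev : (fun s => -(u t * (pdx2 (pdx2 w) (x, s) + pdy2 (pdy2 w) (x, s))))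
            =ᶠ[nhds y] fun s => (u t * μ) * w (x, s) := by
          filter_upwards [hmemy] with s hs
          have h := hweig _ hs
          have : pdx2 (pdx2 w) (x, s) + pdy2 (pdy2 w) (x, s) = -(μ * w (x, s)) := by
            linarith
          rw [this]; ring
        rw [hev.deriv_eq, deriv_const_mul _ ((diff_slice2 hw x) y)]
        show _ = u t * μ * deriv (fun s => w (x, s)) y
        ring
      have hB : pdx (fun q : ℝ×ℝ×ℝ => -(u q.2.2 *
          (pdx2 (pdx2 w) (q.1, q.2.1) + pdy2 (pdy2 w) (q.1, q.2.1)))) (x,y,t)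
          = u t * μ * pdx2 w (x, y) := by
        show deriv (fun s => -(u t * (pdx2 (pdx2 w) (s, y) + pdy2 (pdy2 w) (s, y)))) x = _
        have hev : (fun s => -(u t * (pdx2 (pdx2 w) (s, y) + pdy2 (pdy2 w) (s, y))))
            =ᶠ[nhds x] fun s => (u t * μ) * w (s, y) := by
          filter_upwards [hmemx] with s hs
          have h := hweig _ hs
          have : pdx2 (pdx2 w) (s, y) + pdy2 (pdy2 w) (s, y) = -(μ * w (s, y)) := by
            linarith
          rw [this]; ring
        rw [hev.deriv_eq, deriv_const_mul _ ((diff_slice1 hw y) x)]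
        show _ = u t * μ * deriv (fun s => w (s, y)) x
        ring
      have hC : pdt (fun q : ℝ×ℝ×ℝ => deriv u q.2.2 * pdy2 w (q.1, q.2.1)) (x,y,t)
          = deriv (deriv u) t * pdy2 w (x, y) := by
        show deriv (fun s => deriv u s * pdy2 w (x, y)) t = _
        rw [deriv_mul_const (hdu t)]
      have hD : pdt (fun q : ℝ×ℝ×ℝ => deriv u q.2.2 * pdx2 w (q.1, q.2.1)) (x,y,t)
          = deriv (deriv u) t * pdx2 w (x, y) := by
        show deriv (fun s => deriv u s * pdx2 w (x, y)) t = _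
        rw [deriv_mul_const (hdu t)]
      rw [hA, hB, hC, hD, pdx_umul (deriv u) hwy, pdy_umul (deriv u) hwx]
      show (_, _, _) = ((μ + d) • (u t * pdy2 w (x, y), -(u t * pdx2 w (x, y)), (0:ℝ)))
      simp only [Prod.smul_def, smul_eq_mul, Prod.mk.injEq]
      refine ⟨by rw [hdd]; ring, by rw [hdd]; ring, by rw [clairaut hw]; ring⟩
  · rintro ⟨x, y, t⟩ hpω hbd
    have hz : u t = 0 := by rcases hbd with hb | hb <;> simp_all
    constructor
    · show ((u t * pdy2 w (x, y), -(u t * pdx2 w (x, y)), (0:ℝ)) : ℝ×ℝ×ℝ) = 0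
      simp [hz]
    · simp only [cross3, hz]
      show ((_ : ℝ), (_ : ℝ), (_ : ℝ)) = 0
      norm_num
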